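/- arXiv:2408.00003 — 2 statements merged into one kernel-verified Lean document; each statement's English description precedes it below -/
import Mathlib

section
/- Suppose premiums are adjusted according to aggregate reported claims. Then for every n ≥ 1, every i ∈ {1,…,l}, every integer u ≥ 0 and every integer z > 0: (i) ψ'_i(u;z,n) = ψ_i(u−z,n) if 0 < z ≤ u; (ii) ψ'_i(u;z,n) = ψ'_i(0;z−u,n) if u < z ≤ u + c_i; (iii) ψ'_i(u;z,n) = 1 if z > u + c_i. -/
open scoped BigOperators

noncomputable section

namespace DelayedClaims

set_option maxHeartbeats 1000000

/-- Marginal pmf of the main claim: `f_X(x) = Σ_y f_{XY}(x,y)`. -/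
def fX (f : ℕ → ℕ → ℝ) (x : ℕ) : ℝ := ∑' y : ℕ, f x y

/-- `ξ_y(m) = Σ_{x=1}^m f_{XY}(x, y + m - x)`. -/
def xi (f : ℕ → ℕ → ℝ) (y m : ℕ) : ℝ := ∑ x ∈ Finset.Icc 1 m, f x (y + m - x)

/-- Probability weight of a single period outcome `(x, y, d)`:
`d = true` means the settlement of the by-claim `y` is delayed (probability `q`). -/
def w (f : ℕ → ℕ → ℝ) (q : ℝ) (p : ℕ × ℕ × Bool) : ℝ :=
  f p.1 p.2.1 * (if p.2.2 then q else 1 - q)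

/-- Probability weight of an `n`-period path of i.i.d. period outcomes. -/
def pathWeight (f : ℕ → ℕ → ℝ) (q : ℝ) (n : ℕ) (ω : Fin n → ℕ × ℕ × Bool) : ℝ :=
  ∏ s : Fin n, w f q (ω s)

/-- Ruin indicator along a path.  Here `c` lists the premium levels,
`T i s` is the premium level following level `i` when the period adjustment
statistic equals `s`, `stat x y d carry` is the period adjustment statistic,
`i` is the current premium level, `u` the current surplus, and `carry` the amount
of the by-claim whose settlement was delayed from the previous period (`0` if none).
In each period the premium `c i` is received up front and the settled amount
`x + (1-d)·y + carry` is paid at the end of the period; ruin occurs as soon as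
the surplus becomes negative at the end of some period. -/
def ruined (l : ℕ) (c : Fin l → ℕ) (T : Fin l → ℕ → Fin l)
    (stat : ℕ → ℕ → Bool → ℕ → ℕ) :
    (n : ℕ) → (Fin n → ℕ × ℕ × Bool) → Fin l → ℤ → ℕ → Bool
  | 0, _, _, _, _ => false
  | n + 1, ω, i, u, carry =>
    let x : ℕ := (ω 0).1
    let y : ℕ := (ω 0).2.1
    let d : Bool := (ω 0).2.2
    let u' : ℤ := u + (c i : ℤ) - ((x : ℤ) + (if d then 0 else (y : ℤ)) + (carry : ℤ))
    if u' < 0 then true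
    else ruined l c T stat n (fun s => ω s.succ) (T i (stat x y d carry)) u'
      (if d then y else 0)

/-- `ψ'_i(u; z, n)`: the finite-time ruin probability over horizon `n` of the model with
an up-front delayed by-claim `z` settled at the end of period 1 (taking `z = 0` gives the
model without an up-front delayed by-claim), with initial premium level `i` and
initial surplus `u`.  By convention it equals `1` for `u < 0` and `0` for `n = 0`. -/
def psiAux (l : ℕ) (c : Fin l → ℕ) (T : Fin l → ℕ → Fin l)
    (stat : ℕ → ℕ → Bool → ℕ → ℕ) (f : ℕ → ℕ → ℝ) (q : ℝ)
    (i : Fin l) (u : ℤ) (z : ℕ) (n : ℕ) : ℝ :=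
  if u < 0 then 1
  else ∑' ω : Fin n → ℕ × ℕ × Bool,
    pathWeight f q n ω * (if ruined l c T stat n ω i u z then 1 else 0)

/-- `ψ_i(u, n)`: finite-time ruin probability without an up-front delayed by-claim. -/
def psi (l : ℕ) (c : Fin l → ℕ) (T : Fin l → ℕ → Fin l)
    (stat : ℕ → ℕ → Bool → ℕ → ℕ) (f : ℕ → ℕ → ℝ) (q : ℝ)
    (i : Fin l) (u : ℤ) (n : ℕ) : ℝ :=
  psiAux l c T stat f q i u 0 n

/-- Adjustment statistic: aggregate reported claims `X + Y`. -/
def statRep (x y : ℕ) (_ : Bool) (_ : ℕ) : ℕ := x + y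

/-- Adjustment statistic: aggregate settled claims `X + (1-D)·Y + carry`. -/
def statSet (x y : ℕ) (d : Bool) (carry : ℕ) : ℕ := x + (if d then 0 else y) + carry

/-- Adjustment statistic: reported number of claims `1{X>0} + 1{Y>0}`. -/
def statRepN (x y : ℕ) (_ : Bool) (_ : ℕ) : ℕ :=
  (if 0 < x then 1 else 0) + (if 0 < y then 1 else 0)

/-- Adjustment statistic: settled number of claims
`1{X>0} + 1{Y>0 and not delayed} + 1{delayed by-claim from the previous period}`. -/
def statSetN (x y : ℕ) (d : Bool) (carry : ℕ) : ℕ :=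
  (if 0 < x then 1 else 0) + (if 0 < y ∧ d = false then 1 else 0) +
    (if 0 < carry then 1 else 0)

lemma ruined_shift (l : ℕ) (c : Fin l → ℕ) (T : Fin l → ℕ → Fin l) :
    ∀ (n : ℕ) (ω : Fin n → ℕ × ℕ × Bool) (i : Fin l) (u u' : ℤ) (z z' : ℕ),
      u - (z : ℤ) = u' - (z' : ℤ) →
      ruined l c T statRep n ω i u z = ruined l c T statRep n ω i u' z'
  | 0, _, _, _, _, _, _, _ => rfl
  | n + 1, ω, i, u, u', z, z', h => by
    simp only [ruined, statRep]
    have hv : u + (c i : ℤ) -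
          (((ω 0).1 : ℤ) + (if (ω 0).2.2 then 0 else ((ω 0).2.1 : ℤ)) + (z : ℤ)) =
        u' + (c i : ℤ) -
          (((ω 0).1 : ℤ) + (if (ω 0).2.2 then 0 else ((ω 0).2.1 : ℤ)) + (z' : ℤ)) := by
      split_ifs <;> omega
    rw [hv]

lemma w_nonneg {f : ℕ → ℕ → ℝ} {q : ℝ} (hfnn : ∀ x y, 0 ≤ f x y)
    (hq0 : 0 ≤ q) (hq1 : q ≤ 1) (p : ℕ × ℕ × Bool) : 0 ≤ w f q p := by
  unfold w
  have : (0 : ℝ) ≤ if p.2.2 then q else 1 - q := by split_ifs <;> linarith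
  exact mul_nonneg (hfnn _ _) this

lemma pathWeight_nonneg {f : ℕ → ℕ → ℝ} {q : ℝ} (hfnn : ∀ x y, 0 ≤ f x y)
    (hq0 : 0 ≤ q) (hq1 : q ≤ 1) (n : ℕ) (ω : Fin n → ℕ × ℕ × Bool) :
    0 ≤ pathWeight f q n ω :=
  Finset.prod_nonneg fun s _ => w_nonneg hfnn hq0 hq1 _

lemma w_summable_tsum {f : ℕ → ℕ → ℝ} {q : ℝ} (hfnn : ∀ x y, 0 ≤ f x y)
    (hfsum : ∑' p : ℕ × ℕ, f p.1 p.2 = 1) (hq0 : 0 ≤ q) (hq1 : q ≤ 1) :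
    Summable (w f q) ∧ ∑' p, w f q p = 1 := by
  have hF : Summable (fun p : ℕ × ℕ => f p.1 p.2) := by
    by_contra h
    rw [tsum_eq_zero_of_not_summable h] at hfsum
    norm_num at hfsum
  have hB : Summable (fun d : Bool => if d then q else 1 - q) := Summable.of_finite
  have hG : Summable (fun p : (ℕ × ℕ) × Bool =>
      f p.1.1 p.1.2 * (if p.2 then q else 1 - q)) := by
    apply Summable.mul_of_nonneg hF hB
    · intro p; exact hfnn p.1 p.2
    · intro d; by_cases hd : d <;> simp [hd] <;> linarith
  have he : ∀ p : (ℕ × ℕ) × Bool,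
      w f q ((Equiv.prodAssoc ℕ ℕ Bool) p) =
        f p.1.1 p.1.2 * (if p.2 then q else 1 - q) := fun ⟨⟨x, y⟩, d⟩ => rfl
  constructor
  · rw [← (Equiv.prodAssoc ℕ ℕ Bool).summable_iff]
    exact hG.congr fun p => (he p).symm
  · rw [← (Equiv.prodAssoc ℕ ℕ Bool).tsum_eq (w f q)]
    calc ∑' p : (ℕ × ℕ) × Bool, w f q ((Equiv.prodAssoc ℕ ℕ Bool) p)
        = ∑' p : (ℕ × ℕ) × Bool, f p.1.1 p.1.2 * (if p.2 then q else 1 - q) := by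
          exact tsum_congr he
      _ = ∑' (a : ℕ × ℕ), ∑' (d : Bool), f a.1 a.2 * (if d then q else 1 - q) := by
          exact Summable.tsum_prod' hG fun a => (hB.mul_left (f a.1 a.2))
      _ = ∑' (a : ℕ × ℕ), f a.1 a.2 * ∑' (d : Bool), (if d then q else 1 - q) := by
          exact tsum_congr fun a => tsum_mul_left
      _ = ∑' (a : ℕ × ℕ), f a.1 a.2 := by
          rw [tsum_bool]; exact tsum_congr fun a => by simp
      _ = 1 := hfsum

lemma pathWeight_summable_tsum {f : ℕ → ℕ → ℝ} {q : ℝ} (hfnn : ∀ x y, 0 ≤ f x y)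
    (hfsum : ∑' p : ℕ × ℕ, f p.1 p.2 = 1) (hq0 : 0 ≤ q) (hq1 : q ≤ 1) :
    ∀ n : ℕ, Summable (pathWeight f q n) ∧ ∑' ω, pathWeight f q n ω = 1 := by
  obtain ⟨hw, hw1⟩ := w_summable_tsum hfnn hfsum hq0 hq1
  intro n
  induction n with
  | zero =>
    constructor
    · exact Summable.of_finite
    · rw [tsum_eq_single (fun i : Fin 0 => i.elim0)
        (fun b hb => absurd (Subsingleton.elim b _) hb)]
      simp [pathWeight]
  | succ n ih =>
    obtain ⟨ihs, iht⟩ := ih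
    let e : ((ℕ × ℕ × Bool) × (Fin n → ℕ × ℕ × Bool)) ≃ (Fin (n + 1) → ℕ × ℕ × Bool) :=
      Fin.consEquiv (fun _ => ℕ × ℕ × Bool)
    have hkey0 : ∀ (a : ℕ × ℕ × Bool) (ω : Fin n → ℕ × ℕ × Bool),
        pathWeight f q (n + 1) (Fin.cons a ω) = w f q a * pathWeight f q n ω := by
      intro a ω
      unfold pathWeight
      rw [Fin.prod_univ_succ]
      simp
    have hkey : ∀ p : (ℕ × ℕ × Bool) × (Fin n → ℕ × ℕ × Bool),
        pathWeight f q (n + 1) (e p) = w f q p.1 * pathWeight f q n p.2 :=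
      fun ⟨a, ω⟩ => hkey0 a ω
    have hG : Summable (fun p : (ℕ × ℕ × Bool) × (Fin n → ℕ × ℕ × Bool) =>
        w f q p.1 * pathWeight f q n p.2) :=
      Summable.mul_of_nonneg hw ihs (fun p => w_nonneg hfnn hq0 hq1 p)
        (fun ω => pathWeight_nonneg hfnn hq0 hq1 n ω)
    constructor
    · rw [← e.summable_iff]
      exact hG.congr fun p => (hkey p).symm
    · rw [← e.tsum_eq (pathWeight f q (n + 1))]
      calc ∑' p, pathWeight f q (n + 1) (e p)
          = ∑' p : (ℕ × ℕ × Bool) × (Fin n → ℕ × ℕ × Bool),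
              w f q p.1 * pathWeight f q n p.2 := tsum_congr hkey
        _ = ∑' a, ∑' ω, w f q a * pathWeight f q n ω :=
            Summable.tsum_prod' hG fun a => ihs.mul_left (w f q a)
        _ = ∑' a, w f q a * ∑' ω, pathWeight f q n ω :=
            tsum_congr fun a => tsum_mul_left
        _ = 1 := by rw [iht]; simpa using hw1

/-- Lemma 1: relationship between ψ' and ψ when premiums are adjusted according to
aggregate reported claims. -/
theorem lemma1_reported_aggregate
    (l : ℕ) (c : Fin l → ℕ) (hcpos : ∀ i, 0 < c i) (hcmono : StrictMono c)
    (f : ℕ → ℕ → ℝ) (hfnn : ∀ x y, 0 ≤ f x y)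
    (hfsum : ∑' p : ℕ × ℕ, f p.1 p.2 = 1)
    (hfdeg : ∀ y : ℕ, 0 < y → f 0 y = 0)
    (q : ℝ) (hq0 : 0 ≤ q) (hq1 : q ≤ 1)
    (t : Fin l → Fin l → ℕ → ℝ) (T : Fin l → ℕ → Fin l)
    (hT : ∀ i j s, t i j s = if j = T i s then (1 : ℝ) else 0)
    (n : ℕ) (hn : 1 ≤ n) (i : Fin l) (u z : ℕ) (hz : 0 < z) :
    (z ≤ u →
      psiAux l c T statRep f q i (u : ℤ) z n =
        psi l c T statRep f q i ((u : ℤ) - (z : ℤ)) n) ∧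
    (u < z → z ≤ u + c i →
      psiAux l c T statRep f q i (u : ℤ) z n =
        psiAux l c T statRep f q i 0 (z - u) n) ∧
    (u + c i < z →
      psiAux l c T statRep f q i (u : ℤ) z n = 1) := by
  refine ⟨fun hzu => ?_, fun huz _ => ?_, fun hbig => ?_⟩
  · -- case z ≤ u
    unfold psi psiAux
    rw [if_neg (by omega), if_neg (by omega)]
    exact tsum_congr fun ω => by
      rw [ruined_shift l c T n ω i (u : ℤ) ((u : ℤ) - (z : ℤ)) z 0 (by omega)]
  · -- case u < z
    unfold psiAux
    rw [if_neg (by omega), if_neg (by omega)]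
    exact tsum_congr fun ω => by
      rw [ruined_shift l c T n ω i (u : ℤ) 0 z (z - u) (by omega)]
  · -- case z > u + c i
    obtain ⟨m, rfl⟩ := Nat.exists_eq_succ_of_ne_zero (by omega : n ≠ 0)
    unfold psiAux
    rw [if_neg (by omega)]
    have hr : ∀ ω : Fin (m + 1) → ℕ × ℕ × Bool,
        ruined l c T statRep (m + 1) ω i (u : ℤ) z = true := by
      intro ω
      simp only [ruined]
      rw [if_pos]
      split_ifs <;> omega
    calc ∑' ω, pathWeight f q (m + 1) ω *
          (if ruined l c T statRep (m + 1) ω i (u : ℤ) z then 1 else 0)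
        = ∑' ω, pathWeight f q (m + 1) ω := tsum_congr fun ω => by rw [hr ω]; simp
      _ = 1 := (pathWeight_summable_tsum hfnn hfsum hq0 hq1 (m + 1)).2

end DelayedClaims
end
end

section
/- Suppose premiums are adjusted according to aggregate settled claims. Then for every integer u ≥ 0, every i ∈ {1,…,l}, every integer z with 0 < z ≤ u + c_i and every n ≥ 1: ψ'_i(u;z,n+1) = Σ_{j=1}^l Σ_{x=0}^{u−z+c_i} t_{ij}(x+z)·ψ_j(u−z+c_i−x, n)·f_{XY}(x,0) + (1−q)·Σ_{j=1}^l Σ_{x=1}^{u−z+c_i−1} Σ_{y=1}^{u−z+c_i−x} t_{ij}(x+y+z)·ψ_j(u−z+c_i−x−y, n)·f_{XY}(x,y) + q·Σ_{j=1}^l Σ_{x=1}^{u−z+c_i} Σ_{y=1}^{u−z+c_i−x+c_j} t_{ij}(x+z)·ψ'_j(u−z+c_i−x;y,n)·f_{XY}(x,y) + q·Σ_{j=1}^l Σ_{x=1}^{u−z+c_i} Σ_{y=u−z+c_i−x+c_j+1}^∞ t_{ij}(x+z)·f_{XY}(x,y) + (1−q)·Σ_{y=1}^∞ ξ_y(u−z+c_i)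 + Σ_{x=u−z+c_i+1}^∞ f_X(x), and moreover ψ'_i(u;z,1) = Σ_{x=u−z+c_i+1}^∞ f_X(x) + (1−q)·Σ_{y=1}^∞ ξ_y(u−z+c_i). -/
open scoped BigOperators

noncomputable section

namespace DelayedClaims

section
variable {f : ℕ → ℕ → ℝ} {q : ℝ}
  (hfnn : ∀ x y, 0 ≤ f x y) (hq0 : 0 ≤ q) (hq1 : q ≤ 1)

lemma summable_f (hfsum : ∑' p : ℕ × ℕ, f p.1 p.2 = 1) :
    Summable (fun p : ℕ × ℕ => f p.1 p.2) := by
  by_contra h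
  rw [tsum_eq_zero_of_not_summable h] at hfsum; norm_num at hfsum

include hfnn hq0 hq1 in
lemma w_nonneg_s4 : ∀ p, 0 ≤ w f q p := by
  intro p; unfold w
  have : 0 ≤ (if p.2.2 then q else 1 - q) := by split <;> linarith
  exact mul_nonneg (hfnn _ _) this

include hfnn hq0 hq1 in
set_option maxHeartbeats 1000000 in
lemma summable_w_aux (hf : Summable (fun p : ℕ × ℕ => f p.1 p.2)) :
    Summable (fun pb : (ℕ × ℕ) × Bool => f pb.1.1 pb.1.2 * (if pb.2 then q else 1 - q)) := by
  have hB : Summable (fun b : Bool => if b then q else 1 - q) := Summable.of_finite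
  exact hf.mul_of_nonneg hB (fun p => hfnn p.1 p.2)
    (fun b => by simp only [Pi.zero_apply]; split <;> linarith)

include hfnn hq0 hq1 in
lemma summable_w (hf : Summable (fun p : ℕ × ℕ => f p.1 p.2)) : Summable (w f q) := by
  have h2 : Summable (fun pb : (ℕ × ℕ) × Bool => w f q (Equiv.prodAssoc ℕ ℕ Bool pb)) :=
    (summable_w_aux hfnn hq0 hq1 hf).congr (fun pb => rfl)
  exact ((Equiv.prodAssoc ℕ ℕ Bool).summable_iff).mp h2

include hfnn hq0 hq1 in
lemma tsum_w (hf : Summable (fun p : ℕ × ℕ => f p.1 p.2))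
    (hfsum : ∑' p : ℕ × ℕ, f p.1 p.2 = 1) : ∑' p, w f q p = 1 := by
  rw [← (Equiv.prodAssoc ℕ ℕ Bool).tsum_eq (w f q)]
  calc ∑' pb : (ℕ × ℕ) × Bool, w f q (Equiv.prodAssoc ℕ ℕ Bool pb)
      = ∑' p : ℕ × ℕ, ∑' b : Bool, f p.1 p.2 * (if b then q else 1 - q) :=
        Summable.tsum_prod (summable_w_aux hfnn hq0 hq1 hf)
    _ = ∑' p : ℕ × ℕ, f p.1 p.2 := by
        congr 1; funext p; rw [tsum_bool]; simp; ring
    _ = 1 := hfsum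

include hfnn hq0 hq1 in
lemma pathWeight_nonneg_s4 (n : ℕ) : ∀ ω, 0 ≤ pathWeight f q n ω := by
  intro ω; exact Finset.prod_nonneg fun s _ => w_nonneg_s4 hfnn hq0 hq1 _

include hfnn hq0 hq1 in
lemma summable_pathWeight (hf : Summable (fun p : ℕ × ℕ => f p.1 p.2))
    (hfsum : ∑' p : ℕ × ℕ, f p.1 p.2 = 1) (n : ℕ) :
    Summable (pathWeight f q n) ∧ ∑' ω, pathWeight f q n ω = 1 := by
  induction n with
  | zero =>
    constructor
    · exact Summable.of_finite
    · rw [tsum_eq_single (f := pathWeight f q 0) default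
        (fun b hb => absurd (Subsingleton.elim b default) hb)]
      simp [pathWeight]
  | succ n ih =>
    have hw := summable_w hfnn hq0 hq1 hf
    set e := Fin.consEquiv (fun _ : Fin (n+1) => ℕ × ℕ × Bool) with he
    have hcomp : ∀ x : (ℕ × ℕ × Bool) × (Fin n → ℕ × ℕ × Bool),
        pathWeight f q (n+1) (e x) = w f q x.1 * pathWeight f q n x.2 := by
      intro x
      show pathWeight f q (n+1) (Fin.cons x.1 x.2) = w f q x.1 * pathWeight f q n x.2
      unfold pathWeight
      rw [Fin.prod_univ_succ]
      simp [Fin.cons_succ, Fin.cons_zero]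
    have hs : Summable (fun x : (ℕ × ℕ × Bool) × (Fin n → ℕ × ℕ × Bool) =>
        w f q x.1 * pathWeight f q n x.2) :=
      hw.mul_of_nonneg ih.1 (w_nonneg_s4 hfnn hq0 hq1) (pathWeight_nonneg_s4 hfnn hq0 hq1 n)
    have hsum : Summable (pathWeight f q (n+1)) := by
      rw [← e.summable_iff]
      exact (summable_congr hcomp).mpr hs
    refine ⟨hsum, ?_⟩
    rw [← e.tsum_eq (pathWeight f q (n+1)), tsum_congr hcomp, Summable.tsum_prod hs]
    calc ∑' p, ∑' ω, w f q p * pathWeight f q n ω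
        = ∑' p, w f q p * ∑' ω, pathWeight f q n ω := by
          congr 1; funext p; exact tsum_mul_left
      _ = 1 := by
          rw [ih.2]; simp only [mul_one]; exact tsum_w hfnn hq0 hq1 hf hfsum

end

section
variable {l : ℕ} {c : Fin l → ℕ} {T : Fin l → ℕ → Fin l} {stat : ℕ → ℕ → Bool → ℕ → ℕ}
  {f : ℕ → ℕ → ℝ} {q : ℝ}

lemma ruined_cons (n : ℕ) (p : ℕ × ℕ × Bool) (ω : Fin n → ℕ × ℕ × Bool)
    (i : Fin l) (u : ℤ) (carry : ℕ) :
    ruined l c T stat (n+1) (Fin.cons p ω) i u carry =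
      if u + (c i : ℤ) - ((p.1 : ℤ) + (if p.2.2 then 0 else (p.2.1 : ℤ)) + (carry : ℤ)) < 0
        then true
      else ruined l c T stat n ω (T i (stat p.1 p.2.1 p.2.2 carry))
        (u + (c i : ℤ) - ((p.1 : ℤ) + (if p.2.2 then 0 else (p.2.1 : ℤ)) + (carry : ℤ)))
        (if p.2.2 then p.2.1 else 0) := by
  simp only [ruined, Fin.cons_zero, Fin.cons_succ]

end

section
variable {l : ℕ} {c : Fin l → ℕ} {T : Fin l → ℕ → Fin l} {stat : ℕ → ℕ → Bool → ℕ → ℕ}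
  {f : ℕ → ℕ → ℝ} {q : ℝ}
variable (hfnn : ∀ x y, 0 ≤ f x y) (hq0 : 0 ≤ q) (hq1 : q ≤ 1)
  (hf : Summable (fun p : ℕ × ℕ => f p.1 p.2)) (hfsum : ∑' p : ℕ × ℕ, f p.1 p.2 = 1)

include hfnn hq0 hq1 hf hfsum in
lemma psiAux_eq_one (j : Fin l) (v : ℤ) (y : ℕ) (n : ℕ) (hn : 1 ≤ n)
    (hy : v + (c j : ℤ) < (y : ℤ)) :
    psiAux l c T stat f q j v y n = 1 := by
  by_cases hv : v < 0
  · rw [psiAux, if_pos hv]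
  · obtain ⟨n', rfl⟩ : ∃ n', n = n' + 1 := ⟨n - 1, by omega⟩
    rw [psiAux, if_neg hv]
    have hall : ∀ ω : Fin (n'+1) → ℕ × ℕ × Bool,
        ruined l c T stat (n'+1) ω j v y = true := by
      intro ω
      have : ω = Fin.cons (ω 0) (fun s => ω s.succ) := by
        funext s; exact (Fin.cons_self_tail ω).symm ▸ rfl
      rw [this, ruined_cons]
      rw [if_pos]
      have h1 : (0:ℤ) ≤ ((ω 0).1 : ℤ) := Int.natCast_nonneg _
      have h2 : (0:ℤ) ≤ (if (ω 0).2.2 then 0 else ((ω 0).2.1 : ℤ)) := by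
        split
        · exact le_refl 0
        · exact Int.natCast_nonneg _
      omega
    have : ∀ ω : Fin (n'+1) → ℕ × ℕ × Bool,
        pathWeight f q (n'+1) ω * (if ruined l c T stat (n'+1) ω j v y then 1 else 0)
          = pathWeight f q (n'+1) ω := by
      intro ω; rw [hall ω]; simp
    rw [tsum_congr this]
    exact (summable_pathWeight hfnn hq0 hq1 hf hfsum (n'+1)).2

include hfnn hq0 hq1 hf hfsum in
lemma psiAux_succ (i : Fin l) (u : ℤ) (hu : ¬ u < 0) (z : ℕ) (n : ℕ) :
    psiAux l c T stat f q i u z (n+1) =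
    ∑' p : ℕ × ℕ × Bool, w f q p *
      (if u + (c i : ℤ) - ((p.1 : ℤ) + (if p.2.2 then 0 else (p.2.1 : ℤ)) + (z : ℤ)) < 0 then 1
       else psiAux l c T stat f q (T i (stat p.1 p.2.1 p.2.2 z))
              (u + (c i : ℤ) - ((p.1 : ℤ) + (if p.2.2 then 0 else (p.2.1 : ℤ)) + (z : ℤ)))
              (if p.2.2 then p.2.1 else 0) n) := by
  rw [psiAux, if_neg hu]
  set e := Fin.consEquiv (fun _ : Fin (n+1) => ℕ × ℕ × Bool) with he
  set F : (Fin (n+1) → ℕ × ℕ × Bool) → ℝ := fun ω =>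
    pathWeight f q (n+1) ω * (if ruined l c T stat (n+1) ω i u z then 1 else 0) with hF
  have hcomp : ∀ x : (ℕ × ℕ × Bool) × (Fin n → ℕ × ℕ × Bool),
      F (e x) = (w f q x.1 * pathWeight f q n x.2) *
        (if ruined l c T stat (n+1) (Fin.cons x.1 x.2) i u z then 1 else 0) := by
    intro x
    have h1 : pathWeight f q (n+1) (Fin.cons x.1 x.2) = w f q x.1 * pathWeight f q n x.2 := by
      unfold pathWeight
      rw [Fin.prod_univ_succ]
      simp [Fin.cons_succ, Fin.cons_zero]
    have hex : e x = Fin.cons x.1 x.2 := rfl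
    show pathWeight f q (n+1) (e x) * (if ruined l c T stat (n+1) (e x) i u z then (1:ℝ) else 0) = _
    rw [hex, h1]
  -- summability of the composed function
  have hs0 : Summable (fun x : (ℕ × ℕ × Bool) × (Fin n → ℕ × ℕ × Bool) =>
      w f q x.1 * pathWeight f q n x.2) :=
    (summable_w hfnn hq0 hq1 hf).mul_of_nonneg
      (summable_pathWeight hfnn hq0 hq1 hf hfsum n).1
      (w_nonneg_s4 hfnn hq0 hq1) (pathWeight_nonneg_s4 hfnn hq0 hq1 n)
  have hs : Summable (fun x : (ℕ × ℕ × Bool) × (Fin n → ℕ × ℕ × Bool) => F (e x)) := by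
    apply Summable.of_nonneg_of_le _ _ hs0
    · intro x
      rw [hcomp x]
      apply mul_nonneg (mul_nonneg (w_nonneg_s4 hfnn hq0 hq1 _)
        (pathWeight_nonneg_s4 hfnn hq0 hq1 n _))
      split <;> norm_num
    · intro x
      rw [hcomp x]
      have h0 : 0 ≤ w f q x.1 * pathWeight f q n x.2 :=
        mul_nonneg (w_nonneg_s4 hfnn hq0 hq1 _) (pathWeight_nonneg_s4 hfnn hq0 hq1 n _)
      have : (if ruined l c T stat (n+1) (Fin.cons x.1 x.2) i u z then (1:ℝ) else 0) ≤ 1 := by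
        split <;> norm_num
      nlinarith
  rw [← e.tsum_eq F, Summable.tsum_prod hs]
  apply tsum_congr
  intro p
  rw [tsum_congr (fun ω => hcomp (p, ω))]
  by_cases hruin :
      u + (c i : ℤ) - ((p.1 : ℤ) + (if p.2.2 then 0 else (p.2.1 : ℤ)) + (z : ℤ)) < 0
  · rw [if_pos hruin]
    have : ∀ ω : Fin n → ℕ × ℕ × Bool,
        (w f q p * pathWeight f q n ω) *
          (if ruined l c T stat (n+1) (Fin.cons p ω) i u z then 1 else 0)
        = w f q p * pathWeight f q n ω := by
      intro ω
      rw [ruined_cons, if_pos hruin]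
      simp
    rw [tsum_congr this, tsum_mul_left, (summable_pathWeight hfnn hq0 hq1 hf hfsum n).2,
      mul_one]
  · rw [if_neg hruin]
    have : ∀ ω : Fin n → ℕ × ℕ × Bool,
        (w f q p * pathWeight f q n ω) *
          (if ruined l c T stat (n+1) (Fin.cons p ω) i u z then 1 else 0)
        = w f q p * (pathWeight f q n ω *
            (if ruined l c T stat n ω (T i (stat p.1 p.2.1 p.2.2 z))
              (u + (c i : ℤ) - ((p.1 : ℤ) + (if p.2.2 then 0 else (p.2.1 : ℤ)) + (z : ℤ)))
              (if p.2.2 then p.2.1 else 0) then 1 else 0)) := by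
      intro ω
      rw [ruined_cons, if_neg hruin, mul_assoc]
    rw [tsum_congr this, tsum_mul_left]
    congr 1
    rw [psiAux, if_neg hruin]

end

lemma range_succ_split (g : ℕ → ℝ) (N : ℕ) :
    ∑ y ∈ Finset.range (N+1), g y = g 0 + ∑ y ∈ Finset.Icc 1 N, g y := by
  have h : Finset.range (N+1) = insert 0 (Finset.Icc 1 N) := by
    ext k; simp only [Finset.mem_range, Finset.mem_insert, Finset.mem_Icc]; omega
  rw [h, Finset.sum_insert (by simp)]

section
variable {l : ℕ} {c : Fin l → ℕ} {T : Fin l → ℕ → Fin l} {stat : ℕ → ℕ → Bool → ℕ → ℕ}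
  {f : ℕ → ℕ → ℝ} {q : ℝ}
variable (hfnn : ∀ x y, 0 ≤ f x y) (hq0 : 0 ≤ q) (hq1 : q ≤ 1)
  (hf : Summable (fun p : ℕ × ℕ => f p.1 p.2)) (hfsum : ∑' p : ℕ × ℕ, f p.1 p.2 = 1)

include hfnn hq0 hq1 hf hfsum in
lemma psiAux_nonneg (i : Fin l) (u : ℤ) (z n : ℕ) :
    0 ≤ psiAux l c T stat f q i u z n := by
  rw [psiAux]
  split
  · norm_num
  · refine tsum_nonneg fun ω => mul_nonneg (pathWeight_nonneg_s4 hfnn hq0 hq1 n ω) ?_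
    split <;> norm_num

include hfnn hq0 hq1 hf hfsum in
lemma psiAux_le_one (i : Fin l) (u : ℤ) (z n : ℕ) :
    psiAux l c T stat f q i u z n ≤ 1 := by
  rw [psiAux]
  split
  · norm_num
  · refine le_trans (Summable.tsum_le_tsum (fun ω => ?_) ?_
      (summable_pathWeight hfnn hq0 hq1 hf hfsum n).1)
      (le_of_eq (summable_pathWeight hfnn hq0 hq1 hf hfsum n).2)
    · have h0 := pathWeight_nonneg_s4 hfnn hq0 hq1 n ω
      have : (if ruined l c T stat n ω i u z then (1:ℝ) else 0) ≤ 1 := by split <;> norm_num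
      nlinarith
    · refine Summable.of_nonneg_of_le (fun ω => ?_) (fun ω => ?_)
        (summable_pathWeight hfnn hq0 hq1 hf hfsum n).1
      · refine mul_nonneg (pathWeight_nonneg_s4 hfnn hq0 hq1 n ω) ?_
        split <;> norm_num
      · have h0 := pathWeight_nonneg_s4 hfnn hq0 hq1 n ω
        have : (if ruined l c T stat n ω i u z then (1:ℝ) else 0) ≤ 1 := by split <;> norm_num
        nlinarith

include hfnn hf in
lemma summable_f_mul (G : ℕ × ℕ → ℝ) (hG0 : ∀ pr, 0 ≤ G pr) (hG1 : ∀ pr, G pr ≤ 1) :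
    Summable (fun pr : ℕ × ℕ => f pr.1 pr.2 * G pr) := by
  refine Summable.of_nonneg_of_le (fun pr => mul_nonneg (hfnn _ _) (hG0 pr)) (fun pr => ?_) hf
  exact mul_le_of_le_one_right (hfnn _ _) (hG1 pr)

include hfnn hq0 hq1 hf in
lemma tsum_w_mul (G : ℕ × ℕ × Bool → ℝ) (hG0 : ∀ p, 0 ≤ G p) (hG1 : ∀ p, G p ≤ 1) :
    ∑' p, w f q p * G p
      = (1-q) * ∑' pr : ℕ × ℕ, f pr.1 pr.2 * G (pr.1, pr.2, false)
        + q * ∑' pr : ℕ × ℕ, f pr.1 pr.2 * G (pr.1, pr.2, true) := by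
  set e := Equiv.prodAssoc ℕ ℕ Bool with he
  have hwe : Summable (fun pb : (ℕ × ℕ) × Bool => w f q (e pb)) :=
    (summable_w_aux hfnn hq0 hq1 hf).congr (fun pb => rfl)
  have h1 : Summable (fun pb : (ℕ × ℕ) × Bool => w f q (e pb) * G (e pb)) := by
    refine Summable.of_nonneg_of_le (fun pb => ?_) (fun pb => ?_) hwe
    · exact mul_nonneg (w_nonneg_s4 hfnn hq0 hq1 _) (hG0 _)
    · exact mul_le_of_le_one_right (w_nonneg_s4 hfnn hq0 hq1 _) (hG1 _)
  rw [← e.tsum_eq (fun p => w f q p * G p)]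
  rw [Summable.tsum_prod h1]
  have h2 : ∀ pr : ℕ × ℕ, ∑' b : Bool, w f q (e (pr, b)) * G (e (pr, b))
      = (1-q) * (f pr.1 pr.2 * G (pr.1, pr.2, false))
        + q * (f pr.1 pr.2 * G (pr.1, pr.2, true)) := by
    intro pr
    rw [tsum_bool]
    show f pr.1 pr.2 * (if false then q else 1 - q) * G (pr.1, pr.2, false)
        + f pr.1 pr.2 * (if true then q else 1 - q) * G (pr.1, pr.2, true) = _
    norm_num; ring
  rw [tsum_congr h2]
  have hsf : Summable (fun pr : ℕ × ℕ => (1-q) * (f pr.1 pr.2 * G (pr.1, pr.2, false))) :=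
    ((summable_f_mul hfnn hf (fun pr => G (pr.1, pr.2, false)) (fun pr => hG0 _)
      (fun pr => hG1 _)).mul_left _)
  have hst : Summable (fun pr : ℕ × ℕ => q * (f pr.1 pr.2 * G (pr.1, pr.2, true))) :=
    ((summable_f_mul hfnn hf (fun pr => G (pr.1, pr.2, true)) (fun pr => hG0 _)
      (fun pr => hG1 _)).mul_left _)
  rw [Summable.tsum_add hsf hst, tsum_mul_left, tsum_mul_left]

include hfnn hf in
lemma tsum_fG_split (G : ℕ × ℕ → ℝ) (hG0 : ∀ pr, 0 ≤ G pr) (hG1 : ∀ pr, G pr ≤ 1)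
    (m : ℕ) (hGtail : ∀ x y, m < x → G (x, y) = 1) :
    ∑' pr : ℕ × ℕ, f pr.1 pr.2 * G pr
      = ∑ x ∈ Finset.range (m+1), ∑' y, f x y * G (x, y) + ∑' k, fX f (k+(m+1)) := by
  have hs := summable_f_mul hfnn hf G hG0 hG1
  rw [Summable.tsum_prod hs]
  have hmarg : Summable (fun x => ∑' y, f x y * G (x, y)) := hs.prod
  rw [← Summable.sum_add_tsum_nat_add (m+1) hmarg]
  congr 1
  apply tsum_congr
  intro k
  rw [fX]
  apply tsum_congr
  intro y
  rw [hGtail _ _ (by omega), mul_one]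

end

section
variable {l : ℕ} {c : Fin l → ℕ} {T : Fin l → ℕ → Fin l} {stat : ℕ → ℕ → Bool → ℕ → ℕ}
  {f : ℕ → ℕ → ℝ} {q : ℝ}
variable (hfnn : ∀ x y, 0 ≤ f x y) (hq0 : 0 ≤ q) (hq1 : q ≤ 1)
  (hf : Summable (fun p : ℕ × ℕ => f p.1 p.2)) (hfsum : ∑' p : ℕ × ℕ, f p.1 p.2 = 1)

lemma psiAux_zero (j : Fin l) (v : ℤ) (y : ℕ) (hv : ¬ v < 0) :
    psiAux l c T stat f q j v y 0 = 0 := by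
  rw [psiAux, if_neg hv]
  have : ∀ ω : Fin 0 → ℕ × ℕ × Bool,
      pathWeight f q 0 ω * (if ruined l c T stat 0 ω j v y then 1 else 0) = 0 := by
    intro ω
    have : ruined l c T stat 0 ω j v y = false := rfl
    rw [this]; simp
  rw [tsum_congr this, tsum_zero]

end

/-- Integrand for the non-delayed branch. -/
def Gf (l : ℕ) (c : Fin l → ℕ) (T : Fin l → ℕ → Fin l) (f : ℕ → ℕ → ℝ) (q : ℝ)
    (i : Fin l) (m z n : ℕ) (pr : ℕ × ℕ) : ℝ :=
  if (m : ℤ) < (pr.1 : ℤ) + (pr.2 : ℤ) then 1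
  else psi l c T statSet f q (T i (pr.1 + pr.2 + z)) ((m - pr.1 - pr.2 : ℕ) : ℤ) n

/-- Integrand for the delayed branch. -/
def Gt (l : ℕ) (c : Fin l → ℕ) (T : Fin l → ℕ → Fin l) (f : ℕ → ℕ → ℝ) (q : ℝ)
    (i : Fin l) (m z n : ℕ) (pr : ℕ × ℕ) : ℝ :=
  if (m : ℤ) < (pr.1 : ℤ) then 1
  else psiAux l c T statSet f q (T i (pr.1 + z)) ((m - pr.1 : ℕ) : ℤ) pr.2 n

def Gfull (l : ℕ) (c : Fin l → ℕ) (T : Fin l → ℕ → Fin l) (f : ℕ → ℕ → ℝ) (q : ℝ)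
    (i : Fin l) (u : ℤ) (z n : ℕ) (p : ℕ × ℕ × Bool) : ℝ :=
  if u + (c i : ℤ) - ((p.1 : ℤ) + (if p.2.2 then 0 else (p.2.1 : ℤ)) + (z : ℤ)) < 0 then 1
  else psiAux l c T statSet f q (T i (statSet p.1 p.2.1 p.2.2 z))
        (u + (c i : ℤ) - ((p.1 : ℤ) + (if p.2.2 then 0 else (p.2.1 : ℤ)) + (z : ℤ)))
        (if p.2.2 then p.2.1 else 0) n

section
variable {l : ℕ} {c : Fin l → ℕ} {T : Fin l → ℕ → Fin l}
  {f : ℕ → ℕ → ℝ} {q : ℝ}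
variable (hfnn : ∀ x y, 0 ≤ f x y) (hq0 : 0 ≤ q) (hq1 : q ≤ 1)
  (hf : Summable (fun p : ℕ × ℕ => f p.1 p.2)) (hfsum : ∑' p : ℕ × ℕ, f p.1 p.2 = 1)

include hfnn hq0 hq1 hf hfsum in
lemma psiAux_succ' (i : Fin l) (u : ℤ) (hu : ¬ u < 0) (z n : ℕ) :
    psiAux l c T statSet f q i u z (n+1) =
      ∑' p, w f q p * Gfull l c T f q i u z n p :=
  psiAux_succ hfnn hq0 hq1 hf hfsum i u hu z n

lemma Gfull_false (i : Fin l) (u : ℤ) (m z n : ℕ) (hmZ : (m : ℤ) = u + (c i : ℤ) - z)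
    (x y : ℕ) :
    Gfull l c T f q i u z n (x, y, false) = Gf l c T f q i m z n (x, y) := by
  unfold Gfull Gf
  simp only [statSet, Bool.false_eq_true, if_false]
  by_cases hc : (m : ℤ) < (x : ℤ) + (y : ℤ)
  · rw [if_pos (by omega), if_pos hc]
  · rw [if_neg (by omega), if_neg hc]
    rw [psi]
    have h : u + (c i : ℤ) - ((x : ℤ) + (y : ℤ) + (z : ℤ)) = ((m - x - y : ℕ) : ℤ) := by omega
    rw [h]

lemma Gfull_true (i : Fin l) (u : ℤ) (m z n : ℕ) (hmZ : (m : ℤ) = u + (c i : ℤ) - z)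
    (x y : ℕ) :
    Gfull l c T f q i u z n (x, y, true) = Gt l c T f q i m z n (x, y) := by
  unfold Gfull Gt
  simp only [statSet, if_true, Nat.add_zero]
  by_cases hc : (m : ℤ) < (x : ℤ)
  · rw [if_pos (by omega), if_pos hc]
  · rw [if_neg (by omega), if_neg hc]
    have h : u + (c i : ℤ) - ((x : ℤ) + 0 + (z : ℤ)) = ((m - x : ℕ) : ℤ) := by omega
    rw [h]

include hfnn hq0 hq1 hf hfsum in
lemma Gfull_nonneg (i : Fin l) (u : ℤ) (z n : ℕ) :
    ∀ p, 0 ≤ Gfull l c T f q i u z n p := by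
  intro p; unfold Gfull
  by_cases h : u + (c i : ℤ) - ((p.1 : ℤ) + (if p.2.2 then 0 else (p.2.1 : ℤ)) + (z : ℤ)) < 0
  · rw [if_pos h]; norm_num
  · rw [if_neg h]; exact psiAux_nonneg hfnn hq0 hq1 hf hfsum _ _ _ _

include hfnn hq0 hq1 hf hfsum in
lemma Gfull_le_one (i : Fin l) (u : ℤ) (z n : ℕ) :
    ∀ p, Gfull l c T f q i u z n p ≤ 1 := by
  intro p; unfold Gfull
  by_cases h : u + (c i : ℤ) - ((p.1 : ℤ) + (if p.2.2 then 0 else (p.2.1 : ℤ)) + (z : ℤ)) < 0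
  · exact le_of_eq (if_pos h)
  · rw [if_neg h]; exact psiAux_le_one hfnn hq0 hq1 hf hfsum _ _ _ _

include hfnn hq0 hq1 hf hfsum in
lemma Gf_nonneg (i : Fin l) (m z n : ℕ) : ∀ pr, 0 ≤ Gf l c T f q i m z n pr := by
  intro pr; unfold Gf; split
  · norm_num
  · exact psiAux_nonneg hfnn hq0 hq1 hf hfsum _ _ _ _

include hfnn hq0 hq1 hf hfsum in
lemma Gf_le_one (i : Fin l) (m z n : ℕ) : ∀ pr, Gf l c T f q i m z n pr ≤ 1 := by
  intro pr; unfold Gf; split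
  · norm_num
  · exact psiAux_le_one hfnn hq0 hq1 hf hfsum _ _ _ _

include hfnn hq0 hq1 hf hfsum in
lemma Gt_nonneg (i : Fin l) (m z n : ℕ) : ∀ pr, 0 ≤ Gt l c T f q i m z n pr := by
  intro pr; unfold Gt; split
  · norm_num
  · exact psiAux_nonneg hfnn hq0 hq1 hf hfsum _ _ _ _

include hfnn hq0 hq1 hf hfsum in
lemma Gt_le_one (i : Fin l) (m z n : ℕ) : ∀ pr, Gt l c T f q i m z n pr ≤ 1 := by
  intro pr; unfold Gt; split
  · norm_num
  · exact psiAux_le_one hfnn hq0 hq1 hf hfsum _ _ _ _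

lemma Gf_tail (i : Fin l) (m z n : ℕ) : ∀ x y, m < x → Gf l c T f q i m z n (x, y) = 1 := by
  intro x y hx; unfold Gf
  rw [if_pos (by push_cast; omega)]

lemma Gt_tail (i : Fin l) (m z n : ℕ) : ∀ x y, m < x → Gt l c T f q i m z n (x, y) = 1 := by
  intro x y hx; unfold Gt
  rw [if_pos (by push_cast; omega)]

include hfnn hq0 hq1 hf hfsum in
lemma inner_f (i : Fin l) (m z n : ℕ) (x : ℕ) (hx : x ≤ m) :
    ∑' y, f x y * Gf l c T f q i m z n (x, y)
      = f x 0 * psi l c T statSet f q (T i (x + z)) ((m - x : ℕ) : ℤ) n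
        + ∑ y ∈ Finset.Icc 1 (m - x),
            f x y * psi l c T statSet f q (T i (x + y + z)) ((m - x - y : ℕ) : ℤ) n
        + ∑' k, f x (k + (m - x + 1)) := by
  have hsl : Summable (fun y => f x y * Gf l c T f q i m z n (x, y)) := by
    refine Summable.of_nonneg_of_le
      (fun y => mul_nonneg (hfnn _ _) (Gf_nonneg hfnn hq0 hq1 hf hfsum i m z n _))
      (fun y => mul_le_of_le_one_right (hfnn _ _) (Gf_le_one hfnn hq0 hq1 hf hfsum i m z n _))
      (hf.prod_factor x)
  rw [← Summable.sum_add_tsum_nat_add (m - x + 1) hsl, range_succ_split]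
  congr 1
  · congr 1
    · congr 1
      unfold Gf
      rw [if_neg (by push_cast; omega)]
      norm_num
    · refine Finset.sum_congr rfl (fun y hy => ?_)
      rw [Finset.mem_Icc] at hy
      congr 1
      unfold Gf
      rw [if_neg (by push_cast; omega)]
  · refine tsum_congr (fun k => ?_)
    unfold Gf
    rw [if_pos (by push_cast; omega), mul_one]

include hfnn hq0 hq1 hf hfsum in
lemma inner_t (i : Fin l) (m z n : ℕ) (hn : 1 ≤ n) (x : ℕ) (hx : x ≤ m) :
    ∑' y, f x y * Gt l c T f q i m z n (x, y)
      = f x 0 * psi l c T statSet f q (T i (x + z)) ((m - x : ℕ) : ℤ) n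
        + ∑ y ∈ Finset.Icc 1 (m - x + c (T i (x + z))),
            f x y * psiAux l c T statSet f q (T i (x + z)) ((m - x : ℕ) : ℤ) y n
        + ∑' k, f x (k + (m - x + c (T i (x + z)) + 1)) := by
  have hsl : Summable (fun y => f x y * Gt l c T f q i m z n (x, y)) := by
    refine Summable.of_nonneg_of_le
      (fun y => mul_nonneg (hfnn _ _) (Gt_nonneg hfnn hq0 hq1 hf hfsum i m z n _))
      (fun y => mul_le_of_le_one_right (hfnn _ _) (Gt_le_one hfnn hq0 hq1 hf hfsum i m z n _))
      (hf.prod_factor x)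
  rw [← Summable.sum_add_tsum_nat_add (m - x + c (T i (x + z)) + 1) hsl, range_succ_split]
  congr 1
  · congr 1
    · congr 1
      unfold Gt
      rw [if_neg (by push_cast; omega)]
      rfl
    · refine Finset.sum_congr rfl (fun y hy => ?_)
      rw [Finset.mem_Icc] at hy
      congr 1
      unfold Gt
      rw [if_neg (by push_cast; omega)]
  · refine tsum_congr (fun k => ?_)
    unfold Gt
    rw [if_neg (by push_cast; omega),
      psiAux_eq_one hfnn hq0 hq1 hf hfsum _ _ _ n hn (by push_cast; omega), mul_one]

include hfnn hq0 hq1 hf hfsum in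
lemma inner_t0 (i : Fin l) (m z : ℕ) (x : ℕ) (hx : x ≤ m) :
    ∑' y, f x y * Gt l c T f q i m z 0 (x, y) = 0 := by
  have h : ∀ y, f x y * Gt l c T f q i m z 0 (x, y) = 0 := by
    intro y
    unfold Gt
    rw [if_neg (by push_cast; omega),
      psiAux_zero _ _ _ (by exact not_lt.mpr (Int.natCast_nonneg _)), mul_zero]
  rw [tsum_congr h, tsum_zero]

end

section
variable {l : ℕ} {c : Fin l → ℕ} {T : Fin l → ℕ → Fin l}
  {f : ℕ → ℕ → ℝ} {q : ℝ}
variable (hfnn : ∀ x y, 0 ≤ f x y) (hq0 : 0 ≤ q) (hq1 : q ≤ 1)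
  (hf : Summable (fun p : ℕ × ℕ => f p.1 p.2)) (hfsum : ∑' p : ℕ × ℕ, f p.1 p.2 = 1)

include hfnn hq0 hq1 hf hfsum in
lemma lhs_split (i : Fin l) (u : ℤ) (hu : ¬ u < 0) (m z n : ℕ)
    (hmZ : (m : ℤ) = u + (c i : ℤ) - z) :
    psiAux l c T statSet f q i u z (n+1) =
      (1 - q) * (∑ x ∈ Finset.range (m+1), ∑' y, f x y * Gf l c T f q i m z n (x, y)
                  + ∑' k, fX f (k+(m+1)))
      + q * (∑ x ∈ Finset.range (m+1), ∑' y, f x y * Gt l c T f q i m z n (x, y)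
                  + ∑' k, fX f (k+(m+1))) := by
  rw [psiAux_succ' hfnn hq0 hq1 hf hfsum i u hu z n,
    tsum_w_mul hfnn hq0 hq1 hf (Gfull l c T f q i u z n)
      (Gfull_nonneg hfnn hq0 hq1 hf hfsum i u z n)
      (Gfull_le_one hfnn hq0 hq1 hf hfsum i u z n)]
  have h1 : ∑' pr : ℕ × ℕ, f pr.1 pr.2 * Gfull l c T f q i u z n (pr.1, pr.2, false)
      = ∑' pr : ℕ × ℕ, f pr.1 pr.2 * Gf l c T f q i m z n pr :=
    tsum_congr (fun pr => by rw [Gfull_false i u m z n hmZ pr.1 pr.2])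
  have h2 : ∑' pr : ℕ × ℕ, f pr.1 pr.2 * Gfull l c T f q i u z n (pr.1, pr.2, true)
      = ∑' pr : ℕ × ℕ, f pr.1 pr.2 * Gt l c T f q i m z n pr :=
    tsum_congr (fun pr => by rw [Gfull_true i u m z n hmZ pr.1 pr.2])
  rw [h1, h2,
    tsum_fG_split hfnn hf _ (Gf_nonneg hfnn hq0 hq1 hf hfsum i m z n)
      (Gf_le_one hfnn hq0 hq1 hf hfsum i m z n) m (Gf_tail i m z n),
    tsum_fG_split hfnn hf _ (Gt_nonneg hfnn hq0 hq1 hf hfsum i m z n)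
      (Gt_le_one hfnn hq0 hq1 hf hfsum i m z n) m (Gt_tail i m z n)]

include hfnn hq0 hq1 hf hfsum in
lemma lhs_eval (i : Fin l) (u : ℤ) (hu : ¬ u < 0) (m z n : ℕ) (hn : 1 ≤ n)
    (hmZ : (m : ℤ) = u + (c i : ℤ) - z) :
    psiAux l c T statSet f q i u z (n+1) =
      (∑ x ∈ Finset.range (m+1),
          f x 0 * psi l c T statSet f q (T i (x + z)) ((m - x : ℕ) : ℤ) n)
      + (1 - q) * (∑ x ∈ Finset.range (m+1), ∑ y ∈ Finset.Icc 1 (m - x),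
          f x y * psi l c T statSet f q (T i (x + y + z)) ((m - x - y : ℕ) : ℤ) n)
      + q * (∑ x ∈ Finset.range (m+1), ∑ y ∈ Finset.Icc 1 (m - x + c (T i (x + z))),
          f x y * psiAux l c T statSet f q (T i (x + z)) ((m - x : ℕ) : ℤ) y n)
      + q * (∑ x ∈ Finset.range (m+1), ∑' k, f x (k + (m - x + c (T i (x + z)) + 1)))
      + (1 - q) * (∑ x ∈ Finset.range (m+1), ∑' k, f x (k + (m - x + 1)))
      + ∑' k, fX f (k+(m+1)) := by
  rw [lhs_split hfnn hq0 hq1 hf hfsum i u hu m z n hmZ]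
  rw [Finset.sum_congr rfl (fun x hx =>
    inner_f hfnn hq0 hq1 hf hfsum i m z n x (Nat.lt_succ_iff.mp (Finset.mem_range.mp hx)))]
  rw [Finset.sum_congr rfl (fun x hx =>
    inner_t hfnn hq0 hq1 hf hfsum i m z n hn x (Nat.lt_succ_iff.mp (Finset.mem_range.mp hx)))]
  simp only [Finset.sum_add_distrib]
  ring

include hfnn hq0 hq1 hf hfsum in
lemma lhs_eval0 (i : Fin l) (u : ℤ) (hu : ¬ u < 0) (m z : ℕ)
    (hmZ : (m : ℤ) = u + (c i : ℤ) - z) :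
    psiAux l c T statSet f q i u z 1 =
      (1 - q) * (∑ x ∈ Finset.range (m+1), ∑' k, f x (k + (m - x + 1)))
      + ∑' k, fX f (k+(m+1)) := by
  rw [show psiAux l c T statSet f q i u z 1 = psiAux l c T statSet f q i u z (0+1) from rfl]
  rw [lhs_split hfnn hq0 hq1 hf hfsum i u hu m z 0 hmZ]
  have h1 : ∀ x ∈ Finset.range (m+1),
      ∑' y, f x y * Gf l c T f q i m z 0 (x, y) = ∑' k, f x (k + (m - x + 1)) := by
    intro x hx
    rw [inner_f hfnn hq0 hq1 hf hfsum i m z 0 x (Nat.lt_succ_iff.mp (Finset.mem_range.mp hx))]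
    rw [psi, psiAux_zero _ _ _ (not_lt.mpr (Int.natCast_nonneg _)), mul_zero]
    rw [Finset.sum_eq_zero (fun y hy => by
      rw [psi, psiAux_zero _ _ _ (not_lt.mpr (Int.natCast_nonneg _)), mul_zero])]
    ring
  have h2 : ∀ x ∈ Finset.range (m+1),
      ∑' y, f x y * Gt l c T f q i m z 0 (x, y) = 0 := fun x hx =>
    inner_t0 hfnn hq0 hq1 hf hfsum i m z x (Nat.lt_succ_iff.mp (Finset.mem_range.mp hx))
  rw [Finset.sum_congr rfl h1, Finset.sum_congr rfl h2]
  rw [Finset.sum_const, smul_zero]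
  ring

end

/-- Corollary 2: recursion for ψ' when premiums are adjusted according to
aggregate settled claims (the up-front delayed by-claim z enters the period-1 statistic). -/
theorem corollary2_settled_aggregate
    (l : ℕ) (c : Fin l → ℕ) (hcpos : ∀ i, 0 < c i) (hcmono : StrictMono c)
    (f : ℕ → ℕ → ℝ) (hfnn : ∀ x y, 0 ≤ f x y)
    (hfsum : ∑' p : ℕ × ℕ, f p.1 p.2 = 1)
    (hfdeg : ∀ y : ℕ, 0 < y → f 0 y = 0)
    (q : ℝ) (hq0 : 0 ≤ q) (hq1 : q ≤ 1)
    (t : Fin l → Fin l → ℕ → ℝ) (T : Fin l → ℕ → Fin l)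
    (hT : ∀ i j s, t i j s = if j = T i s then (1 : ℝ) else 0)
    (u : ℕ) (i : Fin l) (z : ℕ) (hz1 : 0 < z) (hz2 : z ≤ u + c i) (n : ℕ) (hn : 1 ≤ n) :
    psiAux l c T statSet f q i (u : ℤ) z (n + 1) =
        (∑ j : Fin l, ∑ x ∈ Finset.range (u + c i - z + 1),
          t i j (x + z) * psi l c T statSet f q j ((u + c i - z - x : ℕ) : ℤ) n * f x 0)
      + (1 - q) * (∑ j : Fin l, ∑ x ∈ Finset.Icc 1 (u + c i - z - 1),
          ∑ y ∈ Finset.Icc 1 (u + c i - z - x),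
            t i j (x + y + z) * psi l c T statSet f q j ((u + c i - z - x - y : ℕ) : ℤ) n * f x y)
      + q * (∑ j : Fin l, ∑ x ∈ Finset.Icc 1 (u + c i - z),
          ∑ y ∈ Finset.Icc 1 (u + c i - z - x + c j),
            t i j (x + z) * psiAux l c T statSet f q j ((u + c i - z - x : ℕ) : ℤ) y n * f x y)
      + q * (∑ j : Fin l, ∑ x ∈ Finset.Icc 1 (u + c i - z), ∑' k : ℕ,
          t i j (x + z) * f x (u + c i - z - x + c j + 1 + k))
      + (1 - q) * (∑' k : ℕ, xi f (k + 1) (u + c i - z))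
      + (∑' k : ℕ, fX f (u + c i - z + 1 + k)) ∧
    psiAux l c T statSet f q i (u : ℤ) z 1 =
      (∑' k : ℕ, fX f (u + c i - z + 1 + k))
      + (1 - q) * (∑' k : ℕ, xi f (k + 1) (u + c i - z)) := by
  have hfS : Summable (fun p : ℕ × ℕ => f p.1 p.2) := summable_f hfsum
  have hu0 : ¬ ((u : ℤ) < 0) := not_lt.mpr (Int.natCast_nonneg u)
  set m := u + c i - z with hm
  have hmZ : (m : ℤ) = (u : ℤ) + (c i : ℤ) - (z : ℤ) := by omega
  -- R6
  have hR6 : (∑' k : ℕ, fX f (m + 1 + k)) = ∑' k, fX f (k + (m+1)) :=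
    tsum_congr (fun k => by congr 1; omega)
  -- R5
  have hR5 : (∑' k : ℕ, xi f (k + 1) m)
      = ∑ x ∈ Finset.range (m+1), ∑' k, f x (k + (m - x + 1)) := by
    simp only [xi]
    calc ∑' k : ℕ, ∑ x ∈ Finset.Icc 1 m, f x (k + 1 + m - x)
        = ∑ x ∈ Finset.Icc 1 m, ∑' k : ℕ, f x (k + 1 + m - x) := by
          refine Summable.tsum_finsetSum (fun x hx => ?_)
          rw [Finset.mem_Icc] at hx
          exact ((summable_nat_add_iff (m - x + 1)).mpr (hfS.prod_factor x)).congr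
            (fun k => by congr 1; omega)
      _ = ∑ x ∈ Finset.Icc 1 m, ∑' k : ℕ, f x (k + (m - x + 1)) :=
          Finset.sum_congr rfl (fun x hx => by
            rw [Finset.mem_Icc] at hx
            exact tsum_congr (fun k => by congr 1; omega))
      _ = ∑ x ∈ Finset.range (m+1), ∑' k : ℕ, f x (k + (m - x + 1)) := by
          refine Finset.sum_subset (fun x hx => ?_) (fun x hx hnot => ?_)
          · rw [Finset.mem_Icc] at hx; rw [Finset.mem_range]; omega
          · rw [Finset.mem_range] at hx; rw [Finset.mem_Icc] at hnot
            have hx0 : x = 0 := by omega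
            subst hx0
            rw [tsum_congr (fun k => hfdeg _ (by omega)), tsum_zero]
  constructor
  · -- main recursion
    rw [lhs_eval hfnn hq0 hq1 hfS hfsum i u hu0 m z n hn hmZ]
    -- R1
    have hR1 : (∑ j : Fin l, ∑ x ∈ Finset.range (m+1),
          t i j (x + z) * psi l c T statSet f q j ((m - x : ℕ) : ℤ) n * f x 0)
        = ∑ x ∈ Finset.range (m+1),
            f x 0 * psi l c T statSet f q (T i (x + z)) ((m - x : ℕ) : ℤ) n := by
      rw [Finset.sum_comm]
      refine Finset.sum_congr rfl (fun x hx => ?_)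
      rw [Finset.sum_eq_single (T i (x + z))]
      · rw [hT, if_pos rfl, one_mul, mul_comm]
      · intro b _ hb; rw [hT, if_neg hb, zero_mul, zero_mul]
      · intro h; exact absurd (Finset.mem_univ _) h
    -- R2
    have hR2 : (∑ j : Fin l, ∑ x ∈ Finset.Icc 1 (m - 1), ∑ y ∈ Finset.Icc 1 (m - x),
          t i j (x + y + z) * psi l c T statSet f q j ((m - x - y : ℕ) : ℤ) n * f x y)
        = ∑ x ∈ Finset.range (m+1), ∑ y ∈ Finset.Icc 1 (m - x),
            f x y * psi l c T statSet f q (T i (x + y + z)) ((m - x - y : ℕ) : ℤ) n := by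
      rw [Finset.sum_comm]
      calc ∑ x ∈ Finset.Icc 1 (m-1), ∑ j : Fin l, ∑ y ∈ Finset.Icc 1 (m - x),
            t i j (x + y + z) * psi l c T statSet f q j ((m - x - y : ℕ) : ℤ) n * f x y
          = ∑ x ∈ Finset.Icc 1 (m-1), ∑ y ∈ Finset.Icc 1 (m - x),
              f x y * psi l c T statSet f q (T i (x + y + z)) ((m - x - y : ℕ) : ℤ) n := by
            refine Finset.sum_congr rfl (fun x hx => ?_)
            rw [Finset.sum_comm]
            refine Finset.sum_congr rfl (fun y hy => ?_)
            rw [Finset.sum_eq_single (T i (x + y + z))]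
            · rw [hT, if_pos rfl, one_mul, mul_comm]
            · intro b _ hb; rw [hT, if_neg hb, zero_mul, zero_mul]
            · intro h; exact absurd (Finset.mem_univ _) h
        _ = ∑ x ∈ Finset.range (m+1), ∑ y ∈ Finset.Icc 1 (m - x),
              f x y * psi l c T statSet f q (T i (x + y + z)) ((m - x - y : ℕ) : ℤ) n := by
            refine Finset.sum_subset (fun x hx => ?_) (fun x hx hnot => ?_)
            · rw [Finset.mem_Icc] at hx; rw [Finset.mem_range]; omega
            · rw [Finset.mem_range] at hx; rw [Finset.mem_Icc] at hnot
              rcases (by omega : x = 0 ∨ m - x = 0) with h0 | h0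
              · subst h0
                refine Finset.sum_eq_zero (fun y hy => ?_)
                rw [Finset.mem_Icc] at hy
                rw [hfdeg _ (by omega), zero_mul]
              · rw [h0]
                simp
    -- R3
    have hR3 : (∑ j : Fin l, ∑ x ∈ Finset.Icc 1 m, ∑ y ∈ Finset.Icc 1 (m - x + c j),
          t i j (x + z) * psiAux l c T statSet f q j ((m - x : ℕ) : ℤ) y n * f x y)
        = ∑ x ∈ Finset.range (m+1), ∑ y ∈ Finset.Icc 1 (m - x + c (T i (x + z))),
            f x y * psiAux l c T statSet f q (T i (x + z)) ((m - x : ℕ) : ℤ) y n := by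
      rw [Finset.sum_comm]
      calc ∑ x ∈ Finset.Icc 1 m, ∑ j : Fin l, ∑ y ∈ Finset.Icc 1 (m - x + c j),
            t i j (x + z) * psiAux l c T statSet f q j ((m - x : ℕ) : ℤ) y n * f x y
          = ∑ x ∈ Finset.Icc 1 m, ∑ y ∈ Finset.Icc 1 (m - x + c (T i (x + z))),
              f x y * psiAux l c T statSet f q (T i (x + z)) ((m - x : ℕ) : ℤ) y n := by
            refine Finset.sum_congr rfl (fun x hx => ?_)
            rw [Finset.sum_eq_single (T i (x + z))]
            · refine Finset.sum_congr rfl (fun y hy => ?_)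
              rw [hT, if_pos rfl, one_mul, mul_comm]
            · intro b _ hb
              refine Finset.sum_eq_zero (fun y hy => ?_)
              rw [hT, if_neg hb, zero_mul, zero_mul]
            · intro h; exact absurd (Finset.mem_univ _) h
        _ = ∑ x ∈ Finset.range (m+1), ∑ y ∈ Finset.Icc 1 (m - x + c (T i (x + z))),
              f x y * psiAux l c T statSet f q (T i (x + z)) ((m - x : ℕ) : ℤ) y n := by
            refine Finset.sum_subset (fun x hx => ?_) (fun x hx hnot => ?_)
            · rw [Finset.mem_Icc] at hx; rw [Finset.mem_range]; omega
            · rw [Finset.mem_range] at hx; rw [Finset.mem_Icc] at hnot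
              have hx0 : x = 0 := by omega
              subst hx0
              refine Finset.sum_eq_zero (fun y hy => ?_)
              rw [Finset.mem_Icc] at hy
              rw [hfdeg _ (by omega), zero_mul]
    -- R4
    have hR4 : (∑ j : Fin l, ∑ x ∈ Finset.Icc 1 m, ∑' k : ℕ,
          t i j (x + z) * f x (m - x + c j + 1 + k))
        = ∑ x ∈ Finset.range (m+1), ∑' k, f x (k + (m - x + c (T i (x + z)) + 1)) := by
      rw [Finset.sum_comm]
      calc ∑ x ∈ Finset.Icc 1 m, ∑ j : Fin l, ∑' k : ℕ,
            t i j (x + z) * f x (m - x + c j + 1 + k)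
          = ∑ x ∈ Finset.Icc 1 m, ∑' k : ℕ, f x (k + (m - x + c (T i (x + z)) + 1)) := by
            refine Finset.sum_congr rfl (fun x hx => ?_)
            rw [Finset.sum_eq_single (T i (x + z))]
            · refine tsum_congr (fun k => ?_)
              rw [hT, if_pos rfl, one_mul]
              congr 1
              omega
            · intro b _ hb
              rw [tsum_congr (fun k => by rw [hT, if_neg hb, zero_mul]), tsum_zero]
            · intro h; exact absurd (Finset.mem_univ _) h
        _ = ∑ x ∈ Finset.range (m+1), ∑' k : ℕ, f x (k + (m - x + c (T i (x + z)) + 1)) := by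
            refine Finset.sum_subset (fun x hx => ?_) (fun x hx hnot => ?_)
            · rw [Finset.mem_Icc] at hx; rw [Finset.mem_range]; omega
            · rw [Finset.mem_range] at hx; rw [Finset.mem_Icc] at hnot
              have hx0 : x = 0 := by omega
              subst hx0
              rw [tsum_congr (fun k => hfdeg _ (by omega)), tsum_zero]
    rw [hR1, hR2, hR3, hR4, hR5, hR6]
  · rw [lhs_eval0 hfnn hq0 hq1 hfS hfsum i u hu0 m z hmZ, hR5, hR6]
    ring


end DelayedClaims
end
end
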